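/- Let σ > 0 and u ≠ 0. Let (Y_j)_{j≥1} be an i.i.d. sequence of real random variables with law N(0,σ²), and let (J_j)_{j≥1} be an i.i.d. sequence, independent of (Y_j), whose common law is symmetric and satisfies ψ := E[cos(u·J₁)] > 0. Apply the ECF spot variance estimator to the noisy observations W_j := Y_j + J_j, i.e. σ̂²_k := −(2/u²)·log( max( (1/k)·∑_{j=1}^{k} cos(u·W_j), k^{−1/2} ) ). Then σ̂²_k → σ² − (2/u²)·log ψ almost surely as k → ∞. (This identifies the additive bias −(2/u²)·log ψ of the estimator in the presence of an independent symmetric jump component, corresponding to the bias term b_{t,n}(u) of equation (3.3).) -/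

import Mathlib

/-!
Since `Y₁ ⟂ J₁`, `E[cos(u(Y₁ + J₁))]` is the real part of the product of the characteristic
functions of `N(0,σ²)` and of `J₁` at `u`, and the Gaussian factor is the real number
`exp(−σ²u²/2)`; hence `E[cos(uW₁)] = exp(−σ²u²/2)·ψ > 0`. The strong law of large numbers for the
i.i.d. bounded variables `cos(uW_j)` gives a.s. convergence of the empirical mean to this value;
the floor `k^{−1/2}` tends to `0`, so it is eventually inactive, and `log` is continuous there.
-/

open MeasureTheory ProbabilityTheory Real Finset Filter Function
open scoped NNReal Topology

lemma integral_cos_mul_eq_re_charFun (μ : Measure ℝ) [IsFiniteMeasure μ] (t : ℝ) :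
    ∫ x, cos (t * x) ∂μ = (charFun μ t).re := by
  rw [charFun_apply_real, ← RCLike.re_eq_complex_re, ← integral_re]
  · simp_rw [← Complex.ofReal_mul, RCLike.re_eq_complex_re, Complex.exp_ofReal_mul_I_re]
  · exact (integrable_const (1 : ℝ)).mono' (by fun_prop) (ae_of_all _ fun x => by
      rw [← Complex.ofReal_mul, Complex.norm_exp_ofReal_mul_I])

namespace ProbabilityTheory

variable {Ω : Type*} [MeasurableSpace Ω] {P : Measure Ω}

lemma IndepFun.integral_cos_mul_add_of_hasLaw_gaussianReal [IsProbabilityMeasure P]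
    {X Y : Ω → ℝ} {v : ℝ≥0} (hX : HasLaw X (gaussianReal 0 v) P) (hY : AEMeasurable Y P)
    (hXY : X ⟂ᵢ[P] Y) (t : ℝ) :
    ∫ ω, cos (t * (X ω + Y ω)) ∂P = exp (-(v * t ^ 2 / 2)) * ∫ ω, cos (t * Y ω) ∂P := by
  have hcos : ∀ Z : Ω → ℝ, AEMeasurable Z P →
      ∫ ω, cos (t * Z ω) ∂P = (charFun (P.map Z) t).re := fun Z hZ => by
    rw [← integral_cos_mul_eq_re_charFun, integral_map hZ (by fun_prop)]
  rw [hcos (fun ω => X ω + Y ω) (hX.aemeasurable.add hY), hcos Y hY,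
    hXY.charFun_map_fun_add_eq_mul hX.aemeasurable hY, Pi.mul_apply, hX.map_eq,
    charFun_gaussianReal]
  have hexponent :
      (t * (0 : ℝ) * Complex.I - v * t ^ 2 / 2 : ℂ) = ((-(v * t ^ 2 / 2) : ℝ) : ℂ) := by
    push_cast
    ring
  rw [hexponent, ← Complex.ofReal_exp, Complex.re_ofReal_mul]

lemma IndepFun.identDistrib_add [IsFiniteMeasure P] {X Y X' Y' : Ω → ℝ}
    (hX : IdentDistrib X X' P P) (hY : IdentDistrib Y Y' P P)
    (hXY : X ⟂ᵢ[P] Y) (hXY' : X' ⟂ᵢ[P] Y') :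
    IdentDistrib (X + Y) (X' + Y') P P where
  aemeasurable_fst := hX.aemeasurable_fst.add hY.aemeasurable_fst
  aemeasurable_snd := hX.aemeasurable_snd.add hY.aemeasurable_snd
  map_eq := by
    rw [hXY.map_add_eq_map_conv_map₀ hX.aemeasurable_fst hY.aemeasurable_fst,
      hXY'.map_add_eq_map_conv_map₀ hX.aemeasurable_snd hY.aemeasurable_snd,
      hX.map_eq, hY.map_eq]

lemma iIndepFun.pairwise_indepFun_add_sumElim {ι β : Type*} [MeasurableSpace β] [Add β]
    [MeasurableAdd₂ β] {Y J : ι → Ω → β} (hmeas : ∀ i, Measurable (Sum.elim Y J i))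
    (hindep : iIndepFun (Sum.elim Y J) P) :
    Pairwise ((· ⟂ᵢ[P] ·) on fun i ω => Y i ω + J i ω) := by
  intro i j hij
  have h := hindep.indepFun_prodMk_prodMk hmeas (.inl i) (.inr i) (.inl j) (.inr j)
    (by simpa using hij) (by simp) (by simp) (by simpa using hij)
  exact h.comp (measurable_fst.add measurable_snd) (measurable_fst.add measurable_snd)

lemma strong_law_ae_real_Icc {X : ℕ → Ω → ℝ} (hint : Integrable (X 1) P)
    (hindep : Pairwise ((· ⟂ᵢ[P] ·) on X)) (hident : ∀ j, IdentDistrib (X j) (X 1) P P) :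
    ∀ᵐ ω ∂P, Tendsto (fun k : ℕ => (1 / (k : ℝ)) * ∑ j ∈ Icc 1 k, X j ω) atTop (𝓝 P[X 1]) := by
  have hshift := strong_law_ae_real (fun i => X (i + 1)) hint
    (fun i j hij => hindep (by simpa using hij)) fun i => hident (i + 1)
  filter_upwards [hshift] with ω hω
  convert hω using 2 with k
  rw [range_eq_Ico, sum_Ico_add' (fun j => X j ω), zero_add, Ico_add_one_right_eq_Icc,
    one_div_mul_eq_div]

end ProbabilityTheory

lemma tendsto_log_max_inv_sqrt {a : ℕ → ℝ} {m : ℝ} (ha : Tendsto a atTop (𝓝 m)) (hm : 0 < m) :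
    Tendsto (fun k : ℕ => log (max (a k) (√k)⁻¹)) atTop (𝓝 (log m)) := by
  have hsqrt : Tendsto (fun k : ℕ => (√k)⁻¹) atTop (𝓝 0) :=
    (tendsto_sqrt_atTop.comp tendsto_natCast_atTop_atTop).inv_tendsto_atTop
  have hmax := ha.max hsqrt
  rw [max_eq_left hm.le] at hmax
  exact (continuousAt_log hm.ne').tendsto.comp hmax

theorem ecf_spot_variance_estimator_bias_general {Ω : Type*} [MeasureSpace Ω]
    [IsProbabilityMeasure (ℙ : Measure Ω)]
    (σ u : ℝ) (hu : u ≠ 0)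
    (Y J : ℕ → Ω → ℝ)
    (hmeas : ∀ i : ℕ ⊕ ℕ, Measurable (Sum.elim Y J i))
    -- all the variables `Y₁, J₁, Y₂, J₂, …` are jointly independent
    (hindep : iIndepFun (Sum.elim Y J) ℙ)
    -- `(Y_j)` is i.i.d. `N(0,σ²)`
    (hYlaw : ∀ j, Measure.map (Y j) ℙ = gaussianReal 0 ⟨σ ^ 2, sq_nonneg σ⟩)
    -- `(J_j)` is i.i.d. with a symmetric common law
    (hJid : ∀ j, Measure.map (J j) ℙ = Measure.map (J 1) ℙ)
    -- `ψ := E[cos(u·J₁)] > 0`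
    (hψ : 0 < ∫ ω, Real.cos (u * J 1 ω) ∂ℙ)
    (W : ℕ → Ω → ℝ) (hW : ∀ j ω, W j ω = Y j ω + J j ω)
    (est : ℕ → Ω → ℝ)
    (hest : ∀ k ω, est k ω
      = -(2 / u ^ 2) * Real.log
          (max ((1 / (k : ℝ)) * ∑ j ∈ Finset.Icc 1 k, Real.cos (u * W j ω))
            ((Real.sqrt k)⁻¹))) :
    ∀ᵐ ω ∂ℙ, Tendsto (fun k => est k ω) atTop
      (nhds (σ ^ 2 - (2 / u ^ 2) * Real.log (∫ ω, Real.cos (u * J 1 ω) ∂ℙ))) := by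
  have hYm (j : ℕ) : Measurable (Y j) := hmeas (.inl j)
  have hJm (j : ℕ) : Measurable (J j) := hmeas (.inr j)
  have hYJ (j : ℕ) : Y j ⟂ᵢ[ℙ] J j := hindep.indepFun (i := .inl j) (j := .inr j) (by simp)
  have hcos : Measurable fun x : ℝ => cos (u * x) := by fun_prop
  obtain rfl : W = fun j ω => Y j ω + J j ω := funext₂ hW
  have hmean : ∫ ω, cos (u * (Y 1 ω + J 1 ω)) ∂ℙ
      = exp (-(σ ^ 2 * u ^ 2 / 2)) * ∫ ω, cos (u * J 1 ω) ∂ℙ :=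
    (hYJ 1).integral_cos_mul_add_of_hasLaw_gaussianReal ⟨(hYm 1).aemeasurable, hYlaw 1⟩
      (hJm 1).aemeasurable u
  have hpair : Pairwise ((· ⟂ᵢ[ℙ] ·) on fun j ω => cos (u * (Y j ω + J j ω))) :=
    fun i j hij => (hindep.pairwise_indepFun_add_sumElim hmeas hij).comp hcos hcos
  have hident (j : ℕ) : IdentDistrib (fun ω => cos (u * (Y j ω + J j ω)))
      (fun ω => cos (u * (Y 1 ω + J 1 ω))) ℙ ℙ :=
    ((hYJ j).identDistrib_add
      ⟨(hYm j).aemeasurable, (hYm 1).aemeasurable, by rw [hYlaw, hYlaw]⟩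
      ⟨(hJm j).aemeasurable, (hJm 1).aemeasurable, hJid j⟩ (hYJ 1)).comp hcos
  have hint : Integrable (fun ω => cos (u * (Y 1 ω + J 1 ω))) ℙ :=
    .of_bound (by fun_prop) 1 (ae_of_all _ fun ω => by simpa using abs_cos_le_one _)
  have hlimit : -(2 / u ^ 2) * log (exp (-(σ ^ 2 * u ^ 2 / 2)) * ∫ ω, cos (u * J 1 ω) ∂ℙ)
      = σ ^ 2 - (2 / u ^ 2) * log (∫ ω, cos (u * J 1 ω) ∂ℙ) := by
    rw [log_mul (exp_ne_zero _) hψ.ne', log_exp]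
    field_simp
    ring
  filter_upwards [strong_law_ae_real_Icc hint hpair hident] with ω hω
  rw [hmean] at hω
  simp_rw [hest, ← hlimit]
  exact (tendsto_log_max_inv_sqrt hω (by positivity)).const_mul _

/-- Bias of the ECF spot variance estimator under an independent symmetric jump
component: with `W_j = Y_j + J_j`, the estimator converges a.s. to
`σ² − (2/u²)·log ψ` where `ψ = E[cos(u·J₁)] > 0`. -/
theorem ecf_spot_variance_estimator_bias {Ω : Type*} [MeasureSpace Ω]
    [IsProbabilityMeasure (ℙ : Measure Ω)]
    (σ u : ℝ) (hσ : 0 < σ) (hu : u ≠ 0)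
    (Y J : ℕ → Ω → ℝ)
    (hmeas : ∀ i : ℕ ⊕ ℕ, Measurable (Sum.elim Y J i))
    -- all the variables `Y₁, J₁, Y₂, J₂, …` are jointly independent
    (hindep : iIndepFun (Sum.elim Y J) ℙ)
    -- `(Y_j)` is i.i.d. `N(0,σ²)`
    (hYlaw : ∀ j, Measure.map (Y j) ℙ = gaussianReal 0 ⟨σ ^ 2, sq_nonneg σ⟩)
    -- `(J_j)` is i.i.d. with a symmetric common law
    (hJid : ∀ j, Measure.map (J j) ℙ = Measure.map (J 1) ℙ)
    (hJsym : Measure.map (fun ω => -(J 1 ω)) ℙ = Measure.map (J 1) ℙ)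
    -- `ψ := E[cos(u·J₁)] > 0`
    (hψ : 0 < ∫ ω, Real.cos (u * J 1 ω) ∂ℙ)
    (W : ℕ → Ω → ℝ) (hW : ∀ j ω, W j ω = Y j ω + J j ω)
    (est : ℕ → Ω → ℝ)
    (hest : ∀ k ω, est k ω
      = -(2 / u ^ 2) * Real.log
          (max ((1 / (k : ℝ)) * ∑ j ∈ Finset.Icc 1 k, Real.cos (u * W j ω))
            ((Real.sqrt k)⁻¹))) :
    ∀ᵐ ω ∂ℙ, Tendsto (fun k => est k ω) atTop
      (nhds (σ ^ 2 - (2 / u ^ 2) * Real.log (∫ ω, Real.cos (u * J 1 ω) ∂ℙ))) :=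
  ecf_spot_variance_estimator_bias_general σ u hu Y J hmeas hindep hYlaw hJid hψ W hW est hest
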